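/- Let P ∈ k[x,y] be square-free as a polynomial in y over k(x) (i.e., gcd(P, ∂P/∂y) = 1 in k(x)[y]) with deg_y P = r ≥ 1. Then for any root α of P in an algebraic closure of k(x), and for every i ≥ 1, the i-th derivative α^{(i)} (with respect to the unique extension of d/dx) can be written as C_i(x, α)/P_y(x, α)^{2i−1} for a polynomial C_i ∈ k[x,y] independent of the choice of root α, where P_y = ∂P/∂y. -/

import Mathlib

open Polynomial

noncomputable section

/-- Normalization on a field: every nonzero element normalizes to `1`. -/
noncomputable def fieldNormalizationMonoid (K : Type*) [Field K] : NormalizationMonoid K := by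
  classical
  exact
  { normUnit := fun a => if h : a = 0 then 1 else (Units.mk0 a h)⁻¹
    normUnit_zero := dif_pos rfl
    normUnit_one := by
      rw [dif_neg one_ne_zero]
      exact Units.ext (by simp)
    normUnit_mul_units := fun {a} u ha => by
      rw [dif_neg (mul_ne_zero ha u.ne_zero), dif_neg ha]
      exact Units.ext (by
        simp only [Units.val_mul, Units.val_inv_eq_inv_val, Units.val_mk0, mul_inv_rev]) }

attribute [local instance] fieldNormalizationMonoid

noncomputable local instance (K : Type*) [Field K] : NormalizedGCDMonoid (Polynomial K) :=
  UniqueFactorizationMonoid.toNormalizedGCDMonoid _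

variable {k : Type*} [Field k] [CharZero k]

/-- The ℓ-th determinantal denominator of a rational matrix: the monic least common
denominator of all minors of size at most ℓ. -/
def detDen {n p : ℕ} (R : Matrix (Fin n) (Fin p) (RatFunc k)) (ℓ : ℕ) : Polynomial k :=
  (Finset.range (ℓ + 1)).lcm fun i =>
    (Finset.univ : Finset ((Fin i ↪ Fin n) × (Fin i ↪ Fin p))).lcm fun fg =>
      (Matrix.det fun a b => R (fg.1 a) (fg.2 b)).denom

/-- Derivative of a rational function. -/
def rfDeriv (f : RatFunc k) : RatFunc k :=
  algebraMap (Polynomial k) (RatFunc k)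
      (Polynomial.derivative f.num * f.denom - f.num * Polynomial.derivative f.denom) /
    algebraMap (Polynomial k) (RatFunc k) (f.denom ^ 2)

/-- The derivation `p(x) d/dx` on `k(x)`. -/
def pDeriv (p : Polynomial k) (f : RatFunc k) : RatFunc k :=
  algebraMap (Polynomial k) (RatFunc k) p * rfDeriv f

/-- Entrywise action of the derivation `p(x) d/dx` on vectors. -/
def pDerivVec {n : ℕ} (p : Polynomial k) (v : Fin n → RatFunc k) : Fin n → RatFunc k :=
  fun i => pDeriv p (v i)

/-- The pseudo-linear map `θ = D + T` on `k(x)^n`, `θ(v) = D(v) + T v`. -/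
def pseudoLinDiff {n : ℕ} (p : Polynomial k) (T : Matrix (Fin n) (Fin n) (RatFunc k))
    (v : Fin n → RatFunc k) : Fin n → RatFunc k :=
  pDerivVec p v + T.mulVec v

/-! Differentiating `P(x, α) = 0` gives `P_y(α) · Q(α)′ = (P_y Q_x - P_x Q_y)(α)` for every
`Q ∈ k[x][y]`, and square-freeness makes `P_y(α)` nonzero at every root. So if
`α^{(i)} = C(α) / P_y(α)^m`, the quotient rule writes `α^{(i+1)}` as a polynomial in `α` over
`P_y(α)^(m+2)`, by the same formula for every root. -/

open scoped Differential

theorem Polynomial.eval₂_ne_zero_of_isCoprime_map {R F B : Type*} [CommRing R] [CommRing F]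
    [CommRing B] [Nontrivial B] (f : R →+* F) (g : F →+* B) {P Q : R[X]}
    (h : IsCoprime (P.map f) (Q.map f)) {α : B} (hP : eval₂ (g.comp f) α P = 0) :
    eval₂ (g.comp f) α Q ≠ 0 := by
  have h' := h.map (eval₂RingHom g α)
  simp only [coe_eval₂RingHom, eval₂_map, hP, isCoprime_zero_left] at h'
  exact h'.ne_zero

theorem rfDeriv_algebraMap {k : Type*} [Field k] (c : k[X]) :
    rfDeriv (algebraMap k[X] (RatFunc k) c) = algebraMap k[X] (RatFunc k) (derivative c) := by
  simp [rfDeriv, RatFunc.num_algebraMap, RatFunc.denom_algebraMap]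

theorem Differential.deriv_div_pow {B : Type*} [Field B] [Differential B] {q : B} (hq : q ≠ 0)
    (N : B) (m : ℕ) :
    (N / q ^ m)′ = (q * (q * N′) - m * N * (q * q′)) / q ^ (m + 2) := by
  rw [Derivation.leibniz_div, Derivation.leibniz_pow]
  rcases m with _ | m
  · simp [field]
  · simp only [smul_eq_mul, nsmul_eq_mul, Nat.add_sub_cancel, Nat.cast_succ]
    field_simp
    ring

namespace Polynomial

variable {A : Type*} [CommRing A] [Differential A]

/-- The vector field `P_y ∂_x - P_x ∂_y`, tangent to the curve `P = 0`. -/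
def tangentDerivation (P : A[X]) : Derivation ℤ A[X] A[X] :=
  derivative P • Differential.mapCoeffs -
    Differential.mapCoeffs P • derivative'.restrictScalars ℤ

theorem tangentDerivation_apply (P Q : A[X]) :
    tangentDerivation P Q =
      derivative P * Differential.mapCoeffs Q - Differential.mapCoeffs P * derivative Q := by
  simp [tangentDerivation]

variable {B : Type*} [Field B] [Differential B] [Algebra A B] [DifferentialAlgebra A B]

theorem mul_deriv_aeval_of_aeval_eq_zero {P : A[X]} {α : B} (hα : aeval α P = 0) (Q : A[X]) :
    aeval α (derivative P) * (aeval α Q)′ = aeval α (tangentDerivation P Q) := by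
  have hP := Differential.deriv_aeval_eq α P
  rw [hα, map_zero] at hP
  rw [tangentDerivation_apply, map_sub, map_mul, map_mul, Differential.deriv_aeval_eq]
  linear_combination -(aeval α (derivative Q)) * hP

def rootDerivNumerator (P : A[X]) : ℕ → A[X]
  | 0 => tangentDerivation P X
  | j + 1 => derivative P * tangentDerivation P (rootDerivNumerator P j) -
      (2 * j + 1 : A[X]) * rootDerivNumerator P j * tangentDerivation P (derivative P)

theorem iterate_deriv_eq_rootDerivNumerator_div {P : A[X]} {α : B} (hα : aeval α P = 0)
    (hPy : aeval α (derivative P) ≠ 0) (j : ℕ) :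
    (⇑(Differential.deriv : Derivation ℤ B B))^[j + 1] α =
      aeval α (rootDerivNumerator P j) / aeval α (derivative P) ^ (2 * j + 1) := by
  induction j with
  | zero =>
    rw [Function.iterate_one, mul_zero, zero_add, pow_one, eq_div_iff hPy, mul_comm,
      rootDerivNumerator, ← mul_deriv_aeval_of_aeval_eq_zero hα, aeval_X]
  | succ j ih =>
    rw [Function.iterate_succ_apply', ih, Differential.deriv_div_pow hPy,
      mul_deriv_aeval_of_aeval_eq_zero hα, mul_deriv_aeval_of_aeval_eq_zero hα,
      rootDerivNumerator]
    simp only [map_sub, map_mul, map_add, map_ofNat, map_one, map_natCast]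
    push_cast
    ring

end Polynomial

theorem derivative_algebraic_root_general (K : Type*) [Field K] (φ0 : RatFunc k →+* K)
    (d : K → K) (hd_add : ∀ a b : K, d (a + b) = d a + d b)
    (hd_mul : ∀ a b : K, d (a * b) = d a * b + a * d b)
    (hd_ext : ∀ f : RatFunc k, d (φ0 f) = φ0 (rfDeriv f))
    (P : Polynomial (Polynomial k))
    (hsqf : IsCoprime (P.map (algebraMap (Polynomial k) (RatFunc k)))
      ((Polynomial.derivative P).map (algebraMap (Polynomial k) (RatFunc k)))) :
    ∀ i : ℕ, 1 ≤ i → ∃ C : Polynomial (Polynomial k),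
      ∀ α : K, Polynomial.eval₂ (φ0.comp (algebraMap (Polynomial k) (RatFunc k))) α P = 0 →
        d^[i] α =
          Polynomial.eval₂ (φ0.comp (algebraMap (Polynomial k) (RatFunc k))) α C /
            (Polynomial.eval₂ (φ0.comp (algebraMap (Polynomial k) (RatFunc k))) α
                (Polynomial.derivative P)) ^ (2 * i - 1) := by
  intro i hi
  obtain ⟨j, rfl⟩ := Nat.exists_eq_add_of_le' hi
  let : Algebra k[X] K := (φ0.comp (algebraMap k[X] (RatFunc k))).toAlgebra
  let : Differential k[X] := ⟨derivative'.restrictScalars ℤ⟩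
  let : Differential K := ⟨Derivation.mk' (AddMonoidHom.mk' d hd_add).toIntLinearMap
    fun a b => by simp [hd_mul, add_comm, mul_comm]⟩
  have : DifferentialAlgebra k[X] K := ⟨fun c => by
    change d (φ0 (algebraMap _ _ c)) = φ0 (algebraMap _ _ (derivative c))
    rw [hd_ext, rfDeriv_algebraMap]⟩
  refine ⟨rootDerivNumerator P j, fun α hα => ?_⟩
  rw [show 2 * (j + 1) - 1 = 2 * j + 1 by omega]
  exact iterate_deriv_eq_rootDerivNumerator_div hα
    (eval₂_ne_zero_of_isCoprime_map (algebraMap k[X] (RatFunc k)) φ0 hsqf hα) j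

/-- Let `P ∈ k[x][y]` be square-free in `y` over `k(x)` with `deg_y P ≥ 1`, and let `K` be a
field extension of `k(x)` endowed with a derivation `d` extending `d/dx`. Then for every
`i ≥ 1` there is a polynomial `C_i ∈ k[x][y]`, independent of the root, such that every root
`α ∈ K` of `P` satisfies `α^{(i)} = C_i(x,α)/P_y(x,α)^{2i−1}`. -/
theorem derivative_algebraic_root (K : Type*) [Field K] (φ0 : RatFunc k →+* K)
    (d : K → K) (hd_add : ∀ a b : K, d (a + b) = d a + d b)
    (hd_mul : ∀ a b : K, d (a * b) = d a * b + a * d b)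
    (hd_ext : ∀ f : RatFunc k, d (φ0 f) = φ0 (rfDeriv f))
    (P : Polynomial (Polynomial k)) (hdeg : 1 ≤ P.natDegree)
    (hsqf : IsCoprime (P.map (algebraMap (Polynomial k) (RatFunc k)))
      ((Polynomial.derivative P).map (algebraMap (Polynomial k) (RatFunc k)))) :
    ∀ i : ℕ, 1 ≤ i → ∃ C : Polynomial (Polynomial k),
      ∀ α : K, Polynomial.eval₂ (φ0.comp (algebraMap (Polynomial k) (RatFunc k))) α P = 0 →
        d^[i] α =
          Polynomial.eval₂ (φ0.comp (algebraMap (Polynomial k) (RatFunc k))) α C /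
            (Polynomial.eval₂ (φ0.comp (algebraMap (Polynomial k) (RatFunc k))) α
                (Polynomial.derivative P)) ^ (2 * i - 1) :=
  derivative_algebraic_root_general K φ0 d hd_add hd_mul hd_ext P hsqf
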